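/- Suppose the relative equations of motion hold: m V̇ + m Ω₂ × V = -∂U/∂X, d/dt(J_R Ω) + Ω₂ × (J_R Ω) = -M, J₂ Ω̇₂ + Ω₂ × J₂Ω₂ = X × ∂U/∂X + M, together with the kinematic equations Ẋ + Ω₂ × X = V and Ṙ = S(Ω)R - S(Ω₂)R, where U = U(X,R) and S(M) = (∂U/∂R)Rᵀ - R(∂U/∂R)ᵀ. Then the total energy E = (1/2)m‖V‖² + (1/2)⟨J_R Ω, Ω⟩ + (1/2)⟨J₂Ω₂, Ω₂⟩ + U(X,R) is constant along solutions. -/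

import Mathlib

open Matrix

/-!
The energy has derivative zero. Dotting the three equations of motion with `V`, `Ω` and `Ω₂`
removes the gyroscopic terms `Ω₂ × ·`, and the kinematic equations turn `dU/dt` into
`UX ⬝ V - (X × UX) ⬝ Ω₂ + M ⬝ (Ω - Ω₂)`, since the Frobenius pairing of `∂U/∂R` with `S(w) R`
is `M ⬝ w`. The rotational term is the delicate one: with `R' = S R` and `S` skew, `J_R` evolves
by the commutator `[S, J_R]`, which gives `d/dt ½ ⟨J_R Ω, Ω⟩ = ⟨P', Ω⟩ + ⟨P, S Ω⟩`.
All the powers then cancel.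
-/

/-- The cross-product (hat) operator matrix `S(x)`. -/
def hat (x : Fin 3 → ℝ) : Matrix (Fin 3) (Fin 3) ℝ :=
  !![0, -x 2, x 1; x 2, 0, -x 0; -x 1, x 0, 0]

/-- Reinterpret a plain vector in `Fin 3 → ℝ` as an element of Euclidean 3-space. -/
def toE (x : Fin 3 → ℝ) : EuclideanSpace ℝ (Fin 3) := WithLp.toLp 2 x

lemma inner_toE (a b : Fin 3 → ℝ) : (inner ℝ (toE a) (toE b) : ℝ) = a ⬝ᵥ b := by
  simp [toE, PiLp.inner_apply, dotProduct, mul_comm]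

lemma norm_toE_sq (a : Fin 3 → ℝ) : ‖toE a‖ ^ 2 = a ⬝ᵥ a := by
  rw [← real_inner_self_eq_norm_sq, inner_toE]

lemma hat_mulVec (w v : Fin 3 → ℝ) : hat w *ᵥ v = w ⨯₃ v := by
  ext i
  fin_cases i <;> simp [hat, mulVec, dotProduct, Fin.sum_univ_three, cross_apply] <;> ring

lemma hat_sub (v w : Fin 3 → ℝ) : hat (v - w) = hat v - hat w := by
  ext i j
  fin_cases i <;> fin_cases j <;> simp [hat] <;> ring

lemma hat_transpose (w : Fin 3 → ℝ) : (hat w)ᵀ = -hat w := by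
  ext i j
  fin_cases i <;> fin_cases j <;> simp [hat]

lemma sum_mul_hat_mul_eq_dotProduct {A R : Matrix (Fin 3) (Fin 3) ℝ} {μ : Fin 3 → ℝ}
    (hμ : hat μ = A * Rᵀ - R * Aᵀ) (w : Fin 3 → ℝ) :
    ∑ i, ∑ j, A i j * (hat w * R) i j = μ ⬝ᵥ w := by
  have h₀ := congrFun (congrFun hμ 2) 1
  have h₁ := congrFun (congrFun hμ 0) 2
  have h₂ := congrFun (congrFun hμ 1) 0
  simp only [hat, of_apply, cons_val', cons_val_zero, cons_val_one, cons_val, cons_val_fin_one,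
    Matrix.sub_apply, mul_apply, transpose_apply, Fin.sum_univ_three, dotProduct] at h₀ h₁ h₂ ⊢
  linear_combination -(w 0) * h₀ - w 1 * h₁ - w 2 * h₂

lemma dotProduct_mulVec_eq_transpose {R n k : Type*} [CommSemiring R] [Fintype n] [Fintype k]
    (v : n → R) (w : k → R) (A : Matrix n k R) :
    v ⬝ᵥ A *ᵥ w = Aᵀ *ᵥ v ⬝ᵥ w := by
  rw [dotProduct_mulVec, mulVec_transpose]

section Derivatives

variable {𝕜 : Type*} [NontriviallyNormedField 𝕜] {l m n : Type*} [Fintype m] {t : 𝕜}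

lemma hasDerivAt_dotProduct {a b : 𝕜 → m → 𝕜} {a' b' : m → 𝕜}
    (ha : ∀ i, HasDerivAt (fun s => a s i) (a' i) t)
    (hb : ∀ i, HasDerivAt (fun s => b s i) (b' i) t) :
    HasDerivAt (fun s => a s ⬝ᵥ b s) (a' ⬝ᵥ b t + a t ⬝ᵥ b') t := by
  simpa only [dotProduct, ← Finset.sum_add_distrib] using
    HasDerivAt.fun_sum fun i _ => (ha i).fun_mul (hb i)

lemma hasDerivAt_mulVec_apply {A : 𝕜 → Matrix n m 𝕜} {v : 𝕜 → m → 𝕜} {A' : Matrix n m 𝕜}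
    {v' : m → 𝕜} (hA : ∀ i j, HasDerivAt (fun s => A s i j) (A' i j) t)
    (hv : ∀ j, HasDerivAt (fun s => v s j) (v' j) t) (i : n) :
    HasDerivAt (fun s => (A s *ᵥ v s) i) ((A' *ᵥ v t + A t *ᵥ v') i) t :=
  hasDerivAt_dotProduct (hA i) hv

lemma hasDerivAt_mul_apply {A : 𝕜 → Matrix l m 𝕜} {B : 𝕜 → Matrix m n 𝕜} {A' : Matrix l m 𝕜}
    {B' : Matrix m n 𝕜} (hA : ∀ i j, HasDerivAt (fun s => A s i j) (A' i j) t)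
    (hB : ∀ i j, HasDerivAt (fun s => B s i j) (B' i j) t) (i : l) (k : n) :
    HasDerivAt (fun s => (A s * B s) i k) ((A' * B t + A t * B') i k) t :=
  hasDerivAt_dotProduct (hA i) (hB · k)

lemma hasDerivAt_mul_mul_transpose_apply [DecidableEq m] {R : 𝕜 → Matrix m m 𝕜} {S : Matrix m m 𝕜}
    (hS : Sᵀ = -S) (hR : ∀ i j, HasDerivAt (fun s => R s i j) ((S * R t) i j) t)
    (J : Matrix m m 𝕜) (i j : m) :
    HasDerivAt (fun s => (R s * J * (R s)ᵀ) i j)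
      ((S * (R t * J * (R t)ᵀ) - R t * J * (R t)ᵀ * S) i j) t := by
  have hRJ (i j : m) : HasDerivAt (fun s => (R s * J) i j) ((S * R t * J) i j) t := by
    simpa using hasDerivAt_mul_apply (B := fun _ => J) (B' := 0) hR
      (fun i j => hasDerivAt_const t (J i j)) i j
  refine (hasDerivAt_mul_apply (B := fun s => (R s)ᵀ) (B' := (S * R t)ᵀ) hRJ
    (fun i j => hR j i) i j).congr_deriv ?_
  rw [transpose_mul, hS]
  noncomm_ring

end Derivatives

section Energy

variable {n : Type*} [Fintype n] {t : ℝ}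

lemma hasDerivAt_half_mulVec_dotProduct_self {J : Matrix n n ℝ} (hJ : Jᵀ = J)
    {Ω : ℝ → n → ℝ} {Ω' : n → ℝ} (hΩ : ∀ i, HasDerivAt (fun s => Ω s i) (Ω' i) t) :
    HasDerivAt (fun s => 1 / 2 * (J *ᵥ Ω s ⬝ᵥ Ω s)) (J *ᵥ Ω' ⬝ᵥ Ω t) t := by
  have hJΩ (i : n) : HasDerivAt (fun s => (J *ᵥ Ω s) i) ((J *ᵥ Ω') i) t := by
    simpa using hasDerivAt_mulVec_apply (A := fun _ => J) (A' := 0)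
      (fun i j => hasDerivAt_const t (J i j)) hΩ i
  refine ((hasDerivAt_dotProduct hJΩ hΩ).const_mul (1 / 2)).congr_deriv ?_
  rw [dotProduct_comm (J *ᵥ Ω t), dotProduct_mulVec_eq_transpose, hJ]
  ring

lemma hasDerivAt_half_dotProduct_of_commutator {J : ℝ → Matrix n n ℝ} {S : Matrix n n ℝ}
    {Ω P : ℝ → n → ℝ} {Ω' P' : n → ℝ} (hJs : (J t)ᵀ = J t) (hS : Sᵀ = -S)
    (hJ : ∀ i j, HasDerivAt (fun s => J s i j) ((S * J t - J t * S) i j) t)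
    (hΩ : ∀ i, HasDerivAt (fun s => Ω s i) (Ω' i) t)
    (hP : ∀ s, P s = J s *ᵥ Ω s) (hP' : ∀ i, HasDerivAt (fun s => P s i) (P' i) t) :
    HasDerivAt (fun s => 1 / 2 * (P s ⬝ᵥ Ω s)) (P' ⬝ᵥ Ω t + P t ⬝ᵥ S *ᵥ Ω t) t := by
  have hP'_eq : P' = (S * J t - J t * S) *ᵥ Ω t + J t *ᵥ Ω' := by
    ext i
    exact (hP' i).unique (by simpa only [hP] using hasDerivAt_mulVec_apply hJ hΩ i)
  have hJΩ' : J t *ᵥ Ω' = P' - S *ᵥ P t + J t *ᵥ S *ᵥ Ω t := by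
    simp only [hP'_eq, hP t, sub_mulVec, ← mulVec_mulVec]
    abel
  have hPΩ' : P t ⬝ᵥ Ω' = P' ⬝ᵥ Ω t + 2 * (P t ⬝ᵥ S *ᵥ Ω t) := by
    calc P t ⬝ᵥ Ω' = Ω t ⬝ᵥ J t *ᵥ Ω' := by rw [dotProduct_mulVec_eq_transpose, hJs, hP t]
      _ = Ω t ⬝ᵥ P' - Ω t ⬝ᵥ S *ᵥ P t + Ω t ⬝ᵥ J t *ᵥ S *ᵥ Ω t := by
        rw [hJΩ', dotProduct_add, dotProduct_sub]
      _ = P' ⬝ᵥ Ω t + 2 * (P t ⬝ᵥ S *ᵥ Ω t) := by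
        rw [dotProduct_mulVec_eq_transpose (Ω t) (P t), hS,
          dotProduct_mulVec_eq_transpose _ _ (J t), hJs, ← hP t, neg_mulVec, neg_dotProduct,
          dotProduct_comm (S *ᵥ Ω t), dotProduct_comm (Ω t)]
        ring
  refine ((hasDerivAt_dotProduct hP' hΩ).const_mul (1 / 2)).congr_deriv ?_
  rw [hPΩ']
  ring

lemma hasDerivAt_half_dotProduct_mul_mul_transpose [DecidableEq n] {R : ℝ → Matrix n n ℝ}
    {S J : Matrix n n ℝ} (hS : Sᵀ = -S) (hJ : Jᵀ = J)
    (hR : ∀ i j, HasDerivAt (fun s => R s i j) ((S * R t) i j) t)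
    {Ω P : ℝ → n → ℝ} {Ω' P' : n → ℝ} (hΩ : ∀ i, HasDerivAt (fun s => Ω s i) (Ω' i) t)
    (hP : ∀ s, P s = (R s * J * (R s)ᵀ) *ᵥ Ω s) (hP' : ∀ i, HasDerivAt (fun s => P s i) (P' i) t) :
    HasDerivAt (fun s => 1 / 2 * (P s ⬝ᵥ Ω s)) (P' ⬝ᵥ Ω t + P t ⬝ᵥ S *ᵥ Ω t) t :=
  hasDerivAt_half_dotProduct_of_commutator
    (by simp only [transpose_mul, transpose_transpose, hJ, mul_assoc]) hS
    (hasDerivAt_mul_mul_transpose_apply hS hR J) hΩ hP hP'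

end Energy

theorem total_energy_conserved_general
    (m : ℝ) (J₁ J₂ : Matrix (Fin 3) (Fin 3) ℝ)
    (hJ₁s : J₁.transpose = J₁)
    (hJ₂s : J₂.transpose = J₂)
    (X V Ω Ω₂ X' V' Ω' Ω₂' P P' M UX : ℝ → Fin 3 → ℝ)
    (R R' UR : ℝ → Matrix (Fin 3) (Fin 3) ℝ) (Ufun : ℝ → ℝ)
    (hVd : ∀ t i, HasDerivAt (fun s => V s i) (V' t i) t)
    (hΩd : ∀ t i, HasDerivAt (fun s => Ω s i) (Ω' t i) t)
    (hΩ₂d : ∀ t i, HasDerivAt (fun s => Ω₂ s i) (Ω₂' t i) t)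
    (hPd : ∀ t i, HasDerivAt (fun s => P s i) (P' t i) t)
    (hRd : ∀ t i j, HasDerivAt (fun s => R s i j) (R' t i j) t)
    (hP : ∀ t, P t = (R t * J₁ * (R t).transpose).mulVec (Ω t))
    (eom1 : ∀ t, m • V' t + m • (Ω₂ t ⨯₃ V t) = -UX t)
    (eom2 : ∀ t, P' t + Ω₂ t ⨯₃ P t = -M t)
    (eom3 : ∀ t, J₂.mulVec (Ω₂' t) + Ω₂ t ⨯₃ (J₂.mulVec (Ω₂ t))
              = X t ⨯₃ UX t + M t)
    (kin1 : ∀ t, X' t + Ω₂ t ⨯₃ X t = V t)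
    (kin2 : ∀ t, R' t = hat (Ω t) * R t - hat (Ω₂ t) * R t)
    (hM : ∀ t, hat (M t) = UR t * (R t).transpose - R t * (UR t).transpose)
    (chain : ∀ t, HasDerivAt Ufun
      ((inner ℝ (toE (UX t)) (toE (X' t)) : ℝ) + ∑ i, ∑ j, UR t i j * R' t i j) t) :
    ∀ t₁ t₂ : ℝ,
      ((1 / 2) * m * ‖toE (V t₁)‖ ^ 2
        + (1 / 2) * (inner ℝ (toE (P t₁)) (toE (Ω t₁)) : ℝ)
        + (1 / 2) * (inner ℝ (toE (J₂.mulVec (Ω₂ t₁))) (toE (Ω₂ t₁)) : ℝ)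
        + Ufun t₁)
      = ((1 / 2) * m * ‖toE (V t₂)‖ ^ 2
        + (1 / 2) * (inner ℝ (toE (P t₂)) (toE (Ω t₂)) : ℝ)
        + (1 / 2) * (inner ℝ (toE (J₂.mulVec (Ω₂ t₂))) (toE (Ω₂ t₂)) : ℝ)
        + Ufun t₂) := by
  have hE (t : ℝ) : HasDerivAt (fun s => 1 / 2 * m * (V s ⬝ᵥ V s) + 1 / 2 * (P s ⬝ᵥ Ω s)
      + 1 / 2 * (J₂ *ᵥ Ω₂ s ⬝ᵥ Ω₂ s) + Ufun s) 0 t := by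
    have hR' : R' t = hat (Ω t - Ω₂ t) * R t := by rw [kin2, hat_sub, sub_mul]
    have hV : m * (V' t ⬝ᵥ V t) = -(UX t ⬝ᵥ V t) := by
      rw [← neg_dotProduct, ← eom1, add_dotProduct, smul_dotProduct, smul_dotProduct,
        dotProduct_comm (_ ⨯₃ _), dot_cross_self, smul_zero, add_zero, smul_eq_mul]
    have hΩ : P' t ⬝ᵥ Ω t + P t ⬝ᵥ hat (Ω t - Ω₂ t) *ᵥ Ω t = -(M t ⬝ᵥ Ω t) := by
      rw [hat_sub, sub_mulVec, hat_mulVec, hat_mulVec, cross_self, zero_sub, cross_anticomm,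
        ← triple_product_permutation, ← triple_product_permutation, dotProduct_comm (Ω t),
        ← add_dotProduct, eom2, neg_dotProduct]
    have hΩ₂ : J₂ *ᵥ Ω₂' t ⬝ᵥ Ω₂ t = (X t ⨯₃ UX t) ⬝ᵥ Ω₂ t + M t ⬝ᵥ Ω₂ t := by
      rw [← add_dotProduct, ← eom3, add_dotProduct, dotProduct_comm (_ ⨯₃ _), dot_self_cross,
        add_zero]
    have hX : UX t ⬝ᵥ X' t = UX t ⬝ᵥ V t - (X t ⨯₃ UX t) ⬝ᵥ Ω₂ t := by
      rw [← kin1, dotProduct_add, triple_product_permutation, dotProduct_comm (Ω₂ t)]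
      ring
    have htrans := (hasDerivAt_dotProduct (hVd t) (hVd t)).const_mul (1 / 2 * m)
    have hrot := hasDerivAt_half_dotProduct_mul_mul_transpose (hat_transpose _) hJ₁s
      (hR' ▸ hRd t) (hΩd t) hP (hPd t)
    have hbody := hasDerivAt_half_mulVec_dotProduct_self hJ₂s (hΩ₂d t)
    refine (((htrans.add hrot).add hbody).add (chain t)).congr_deriv ?_
    rw [inner_toE, hR', sum_mul_hat_mul_eq_dotProduct (hM t), dotProduct_sub,
      dotProduct_comm (V t)]
    linear_combination hV + hΩ + hΩ₂ + hX
  intro t₁ t₂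
  simpa only [norm_toE_sq, inner_toE] using
    is_const_of_deriv_eq_zero (fun t => (hE t).differentiableAt) (fun t => (hE t).deriv) t₁ t₂

theorem total_energy_conserved
    (m : ℝ) (hm : 0 < m) (J₁ J₂ : Matrix (Fin 3) (Fin 3) ℝ)
    (hJ₁ : J₁.PosDef) (hJ₁s : J₁.transpose = J₁)
    (hJ₂ : J₂.PosDef) (hJ₂s : J₂.transpose = J₂)
    (X V Ω Ω₂ X' V' Ω' Ω₂' P P' M UX : ℝ → Fin 3 → ℝ)
    (R R' UR : ℝ → Matrix (Fin 3) (Fin 3) ℝ) (Ufun : ℝ → ℝ)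
    (hSO : ∀ t, R t * (R t).transpose = 1 ∧ (R t).det = 1)
    (hXd : ∀ t i, HasDerivAt (fun s => X s i) (X' t i) t)
    (hVd : ∀ t i, HasDerivAt (fun s => V s i) (V' t i) t)
    (hΩd : ∀ t i, HasDerivAt (fun s => Ω s i) (Ω' t i) t)
    (hΩ₂d : ∀ t i, HasDerivAt (fun s => Ω₂ s i) (Ω₂' t i) t)
    (hPd : ∀ t i, HasDerivAt (fun s => P s i) (P' t i) t)
    (hRd : ∀ t i j, HasDerivAt (fun s => R s i j) (R' t i j) t)
    (hP : ∀ t, P t = (R t * J₁ * (R t).transpose).mulVec (Ω t))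
    (eom1 : ∀ t, m • V' t + m • (Ω₂ t ⨯₃ V t) = -UX t)
    (eom2 : ∀ t, P' t + Ω₂ t ⨯₃ P t = -M t)
    (eom3 : ∀ t, J₂.mulVec (Ω₂' t) + Ω₂ t ⨯₃ (J₂.mulVec (Ω₂ t))
              = X t ⨯₃ UX t + M t)
    (kin1 : ∀ t, X' t + Ω₂ t ⨯₃ X t = V t)
    (kin2 : ∀ t, R' t = hat (Ω t) * R t - hat (Ω₂ t) * R t)
    (hM : ∀ t, hat (M t) = UR t * (R t).transpose - R t * (UR t).transpose)
    (chain : ∀ t, HasDerivAt Ufun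
      ((inner ℝ (toE (UX t)) (toE (X' t)) : ℝ) + ∑ i, ∑ j, UR t i j * R' t i j) t) :
    ∀ t₁ t₂ : ℝ,
      ((1 / 2) * m * ‖toE (V t₁)‖ ^ 2
        + (1 / 2) * (inner ℝ (toE (P t₁)) (toE (Ω t₁)) : ℝ)
        + (1 / 2) * (inner ℝ (toE (J₂.mulVec (Ω₂ t₁))) (toE (Ω₂ t₁)) : ℝ)
        + Ufun t₁)
      = ((1 / 2) * m * ‖toE (V t₂)‖ ^ 2
        + (1 / 2) * (inner ℝ (toE (P t₂)) (toE (Ω t₂)) : ℝ)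
        + (1 / 2) * (inner ℝ (toE (J₂.mulVec (Ω₂ t₂))) (toE (Ω₂ t₂)) : ℝ)
        + Ufun t₂) :=
  total_energy_conserved_general m J₁ J₂ hJ₁s hJ₂s X V Ω Ω₂ X' V' Ω' Ω₂' P P' M UX R R' UR Ufun hVd
    hΩd hΩ₂d hPd hRd hP eom1 eom2 eom3 kin1 kin2 hM chain
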